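/- For n ≥ 2 let I_n be a random variable with P(I_n = i) = 1/((n−i)·θ(n−1)) for 1 ≤ i ≤ n−1, and set ℓ_n = log n for n ≥ 2 and ℓ_1 = 1. Suppose nonnegative real sequences (d_n) and (r_n) satisfy d_n ≤ E[(ℓ_{I_n}/ℓ_n)^{9/2} · d_{I_n}] + r_n for all n ≥ 2, and r_n = O((log n)^{−5/2}). Then for every sufficiently small ε > 0, d_n = O((log n)^{−1/2+ε}). -/

import Mathlib

/-!
We show `d_n ≤ C (log n)^{-1/2}` for `n ≥ 2` by strong induction, which gives the claim for
every `ε > 0`. Inserting the bound for `i < n` into the recurrence, everything reduces to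
`∑_{i<n} (log i)^4 / (n - i) ≤ θ(n-1) (log n)^4 - (log 2 / 4) (log n)^3`: the trivial bound
`(log i)^4 ≤ (log n)^4` loses at least `log 2 (log n)^3` on each of the `≍ n` indices
`i ≤ n/2`, where `log i ≤ log n - log 2`. Divided by `θ(n-1) ≤ 2 log n`, this saving is
`C (log 2 / 8) (log n)^{-5/2}`, which for large `C` absorbs both `r_n = O((log n)^{-5/2})` and
the `i = 1` term `O((log n)^{-9/2})`.
-/

open MeasureTheory Filter Real Asymptotics

noncomputable section

/-- The harmonic sum `θ(n) = ∑_{i=1}^n 1/i`. -/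
def harmSum (n : ℕ) : ℝ := ∑ i ∈ Finset.Icc 1 n, (1 : ℝ) / i

/-- `ℓ_n = log n` for `n ≥ 2` and `ℓ_1 = 1`. -/
def ellFun (n : ℕ) : ℝ := if n = 1 then 1 else Real.log n

open Finset

lemma harmSum_eq_harmonic (n : ℕ) : harmSum n = harmonic n := by
  simp [harmSum, harmonic_eq_sum_Icc]

lemma one_le_harmSum {m : ℕ} (hm : 1 ≤ m) : 1 ≤ harmSum m := by
  rw [harmSum]
  simpa using single_le_sum (f := fun i : ℕ => (1 : ℝ) / i) (fun i _ => by positivity)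
    (mem_Icc.mpr ⟨le_rfl, hm⟩)

lemma harmSum_le_one_add_log (m : ℕ) : harmSum m ≤ 1 + log m := by
  rw [harmSum_eq_harmonic]
  exact_mod_cast harmonic_le_one_add_log m

lemma sum_Icc_one_div_sub_eq_harmSum (n : ℕ) :
    ∑ i ∈ Icc 1 (n - 1), 1 / ((n : ℝ) - i) = harmSum (n - 1) := by
  refine sum_nbij' (fun i => n - i) (fun j => n - j) ?_ ?_ ?_ ?_ ?_ <;>
    intro i hi <;> simp only [mem_Icc] at hi ⊢
  · omega
  · omega
  · omega
  · omega
  · rw [Nat.cast_sub (by omega)]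

lemma one_le_log_natCast {n : ℕ} (hn : 3 ≤ n) : 1 ≤ log n := by
  rw [le_log_iff_exp_le (by positivity)]
  have : (3 : ℝ) ≤ n := by exact_mod_cast hn
  linarith [exp_one_lt_d9]

lemma rpow_sub_one_mul_sub_le_rpow_sub_rpow {x y k : ℝ} (hx : 0 ≤ x) (hxy : x ≤ y)
    (hk : 1 ≤ k) : y ^ (k - 1) * (y - x) ≤ y ^ k - x ^ k := by
  have hpow (z : ℝ) (hz : 0 ≤ z) : z ^ k = z ^ (k - 1) * z := by
    rw [← rpow_add_one' hz (by linarith), sub_add_cancel]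
  have : x ^ (k - 1) * x ≤ y ^ (k - 1) * x := by gcongr
  rw [hpow x hx, hpow y (hx.trans hxy)]
  linarith

lemma log_natCast_le_log_sub_log_two {n i : ℕ} (hi : 1 ≤ i) (hin : i ≤ n / 2) :
    log i ≤ log n - log 2 := by
  have h2i : ((2 * i : ℕ) : ℝ) ≤ n := by exact_mod_cast (by omega : 2 * i ≤ n)
  have := log_le_log (by positivity) h2i
  push_cast at this
  rw [log_mul two_ne_zero (by positivity)] at this
  linarith

lemma sub_natCast_pos_of_mem_Icc {n i : ℕ} (hi : i ∈ Icc 1 (n - 1)) : 0 < (n : ℝ) - i := by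
  have : (i : ℝ) < n := by exact_mod_cast (by simp only [mem_Icc] at hi; omega : i < n)
  linarith

lemma log_natCast_le_log_of_mem_Icc {n i : ℕ} (hi : i ∈ Icc 1 (n - 1)) : log i ≤ log n := by
  have hi' := mem_Icc.mp hi
  exact log_le_log (by exact_mod_cast hi'.1) (by exact_mod_cast (by omega))

lemma log_rpow_sub_log_rpow_nonneg {n i : ℕ} (hi : i ∈ Icc 1 (n - 1)) {k : ℝ} (hk : 1 ≤ k) :
    0 ≤ log n ^ k - log i ^ k :=
  sub_nonneg.mpr <| rpow_le_rpow (log_natCast_nonneg i) (log_natCast_le_log_of_mem_Icc hi)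
    (by linarith)

lemma log_two_div_four_mul_le_sum_Icc {n : ℕ} (hn : 2 ≤ n) {k : ℝ} (hk : 1 ≤ k) :
    log 2 / 4 * log n ^ (k - 1)
      ≤ ∑ i ∈ Icc 1 (n - 1), (log n ^ k - log i ^ k) / ((n : ℝ) - i) := by
  set L := log n
  have hsave : ∀ i ∈ Icc 1 (n / 2),
      log 2 * L ^ (k - 1) / n ≤ (L ^ k - log i ^ k) / ((n : ℝ) - i) := by
    intro i hi
    have hi' : 1 ≤ i ∧ i ≤ n / 2 := mem_Icc.mp hi
    have hi'' : i ∈ Icc 1 (n - 1) := mem_Icc.mpr ⟨hi'.1, by omega⟩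
    have : log 2 * L ^ (k - 1) ≤ L ^ (k - 1) * (L - log i) := by
      rw [mul_comm]
      gcongr
      linarith [log_natCast_le_log_sub_log_two hi'.1 hi'.2]
    refine div_le_div₀ ?_ ?_ (sub_natCast_pos_of_mem_Icc hi'') (by simp)
    · exact log_rpow_sub_log_rpow_nonneg hi'' hk
    · exact this.trans <| rpow_sub_one_mul_sub_le_rpow_sub_rpow (log_natCast_nonneg i)
        (log_natCast_le_log_of_mem_Icc hi'') hk
  have hcard : (n : ℝ) / 4 ≤ #(Icc 1 (n / 2)) := by
    rw [Nat.card_Icc, Nat.add_sub_cancel]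
    have : (n : ℝ) ≤ 4 * ((n / 2 : ℕ) : ℝ) := by exact_mod_cast (by omega : n ≤ 4 * (n / 2))
    linarith
  calc log 2 / 4 * L ^ (k - 1) = (n : ℝ) / 4 * (log 2 * L ^ (k - 1) / n) := by
        field_simp
    _ ≤ #(Icc 1 (n / 2)) • (log 2 * L ^ (k - 1) / n) := by
        rw [nsmul_eq_mul]; gcongr
    _ ≤ ∑ i ∈ Icc 1 (n / 2), (L ^ k - log i ^ k) / ((n : ℝ) - i) :=
        card_nsmul_le_sum _ _ _ hsave
    _ ≤ ∑ i ∈ Icc 1 (n - 1), (L ^ k - log i ^ k) / ((n : ℝ) - i) :=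
        sum_le_sum_of_subset_of_nonneg (Icc_subset_Icc_right (by omega)) fun i hi _ =>
          div_nonneg (log_rpow_sub_log_rpow_nonneg hi hk) (sub_natCast_pos_of_mem_Icc hi).le

lemma sum_Icc_log_rpow_div_le {n : ℕ} (hn : 2 ≤ n) {k : ℝ} (hk : 1 ≤ k) :
    ∑ i ∈ Icc 1 (n - 1), log i ^ k / ((n : ℝ) - i)
      ≤ harmSum (n - 1) * log n ^ k - log 2 / 4 * log n ^ (k - 1) := by
  have htotal :
      ∑ i ∈ Icc 1 (n - 1), log n ^ k / ((n : ℝ) - i) = harmSum (n - 1) * log n ^ k := by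
    simp_rw [div_eq_mul_one_div (log n ^ k), ← mul_sum, sum_Icc_one_div_sub_eq_harmSum, mul_comm]
  calc ∑ i ∈ Icc 1 (n - 1), log i ^ k / ((n : ℝ) - i)
      = ∑ i ∈ Icc 1 (n - 1), log n ^ k / ((n : ℝ) - i)
        - ∑ i ∈ Icc 1 (n - 1), (log n ^ k - log i ^ k) / ((n : ℝ) - i) := by
        rw [← sum_sub_distrib]; congr! 1 with i; ring
    _ ≤ _ := by linarith [log_two_div_four_mul_le_sum_Icc hn hk]

/-- `E[(ℓ_{I_n}/ℓ_n)^p d_{I_n}]` for `P(I_n = i) = 1/((n - i) θ(n - 1))`, `1 ≤ i ≤ n - 1`. -/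
def contractionMean (p : ℝ) (d : ℕ → ℝ) (n : ℕ) : ℝ :=
  (1 / harmSum (n - 1)) * ∑ i ∈ Icc 1 (n - 1), (ellFun i / ellFun n) ^ p * d i / ((n : ℝ) - i)

lemma ellFun_of_two_le {n : ℕ} (hn : 2 ≤ n) : ellFun n = log n := if_neg (by omega)

lemma sum_ellFun_rpow_mul_div_le {p a C : ℝ} {d : ℕ → ℝ} {n : ℕ} (hn : 2 ≤ n) (hd1 : 0 ≤ d 1)
    (hC : 0 ≤ C) (hdi : ∀ i ∈ Ioc 1 (n - 1), d i ≤ C * log i ^ (-a)) :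
    ∑ i ∈ Icc 1 (n - 1), (ellFun i / ellFun n) ^ p * d i / ((n : ℝ) - i)
      ≤ d 1 * log n ^ (-p)
        + C * log n ^ (-p) * ∑ i ∈ Icc 1 (n - 1), log i ^ (p - a) / ((n : ℝ) - i) := by
  have hL : 0 < log n := log_pos (by exact_mod_cast hn)
  have hweight (x : ℝ) (hx : 0 ≤ x) : (x / log n) ^ p = x ^ p * log n ^ (-p) := by
    rw [div_rpow hx hL.le, rpow_neg hL.le, div_eq_mul_inv]
  rw [← add_sum_Ioc_eq_sum_Icc (by omega : 1 ≤ n - 1)]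
  gcongr ?_ + ?_
  · have hn1 : (1 : ℝ) ≤ n - 1 := by
      have : (2 : ℝ) ≤ n := by exact_mod_cast hn
      linarith
    rw [ellFun, if_pos rfl, ellFun_of_two_le hn, hweight 1 zero_le_one, one_rpow, one_mul,
      Nat.cast_one, mul_comm]
    exact div_le_self (by positivity) hn1
  · calc ∑ i ∈ Ioc 1 (n - 1), (ellFun i / ellFun n) ^ p * d i / ((n : ℝ) - i)
        ≤ ∑ i ∈ Ioc 1 (n - 1), C * log n ^ (-p) * (log i ^ (p - a) / ((n : ℝ) - i)) := by
          refine sum_le_sum fun i hi => ?_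
          have hi' := mem_Ioc.mp hi
          have hlogi : 0 < log i := log_pos (by exact_mod_cast hi'.1)
          have hsplit : log i ^ (p - a) = log i ^ p * log i ^ (-a) := by
            rw [sub_eq_add_neg, rpow_add hlogi]
          rw [ellFun_of_two_le hi'.1, ellFun_of_two_le hn, hweight _ hlogi.le, hsplit]
          have := mul_le_mul_of_nonneg_left (hdi i hi)
            (by positivity : 0 ≤ log i ^ p * log n ^ (-p))
          rw [mul_div_assoc', div_le_div_iff_of_pos_right (sub_natCast_pos_of_mem_Icc
            (Ioc_subset_Icc_self hi))]
          linarith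
      _ ≤ C * log n ^ (-p) * ∑ i ∈ Icc 1 (n - 1), log i ^ (p - a) / ((n : ℝ) - i) := by
          rw [← mul_sum]
          gcongr ?_ * ?_
          refine sum_le_sum_of_subset_of_nonneg Ioc_subset_Icc_self fun i hi _ => ?_
          exact div_nonneg (by positivity) (sub_natCast_pos_of_mem_Icc hi).le

lemma harmSum_pred_le_two_mul_log {n : ℕ} (hn : 3 ≤ n) : harmSum (n - 1) ≤ 2 * log n := by
  have hlog : log ((n - 1 : ℕ) : ℝ) ≤ log n :=
    log_le_log (by exact_mod_cast (by omega : 0 < n - 1))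
      (by exact_mod_cast (by omega : n - 1 ≤ n))
  linarith [harmSum_le_one_add_log (n - 1), one_le_log_natCast hn]

lemma contractionMean_le {p a C : ℝ} (hpa : a + 2 ≤ p) {d : ℕ → ℝ} {n : ℕ} (hn : 3 ≤ n)
    (hd1 : 0 ≤ d 1) (hC : 0 ≤ C) (hdi : ∀ i ∈ Ioc 1 (n - 1), d i ≤ C * log i ^ (-a)) :
    contractionMean p d n ≤ C * log n ^ (-a) + (d 1 - C * (log 2 / 8)) * log n ^ (-(a + 2)) := by
  set L := log n
  set θ := harmSum (n - 1)
  have hL1 : 1 ≤ L := one_le_log_natCast hn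
  have hL : 0 < L := by linarith
  have hθ1 : 1 ≤ θ := one_le_harmSum (by omega)
  have hθL : θ ≤ 2 * L := harmSum_pred_le_two_mul_log hn
  have hsum := sum_ellFun_rpow_mul_div_le (p := p) (by omega) hd1 hC hdi
  have hdef := sum_Icc_log_rpow_div_le (n := n) (by omega) (by linarith : 1 ≤ p - a)
  have hpow₁ : L ^ (-p) * L ^ (p - a) = L ^ (-a) := by rw [← rpow_add hL]; ring_nf
  have hpow₂ : L ^ (-p) * L ^ (p - a - 1) = L * L ^ (-(a + 2)) := by
    rw [← rpow_add hL, show -p + (p - a - 1) = 1 + -(a + 2) by ring, rpow_add hL, rpow_one]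
  have hpow₃ : L ^ (-p) ≤ L ^ (-(a + 2)) := rpow_le_rpow_of_exponent_le hL1 (by linarith)
  set y := L ^ (-(a + 2))
  have hy : 0 ≤ y := by positivity
  have hd1_term : d 1 * L ^ (-p) ≤ d 1 * y * θ := by
    calc d 1 * L ^ (-p) ≤ d 1 * y := by gcongr
      _ ≤ d 1 * y * θ := le_mul_of_one_le_right (by positivity) hθ1
  have hsaving : C * (log 2 / 8) * y * θ ≤ C * (log 2 / 4) * (L * y) := by
    have := mul_le_mul_of_nonneg_left hθL (by positivity : 0 ≤ C * (log 2 / 8) * y)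
    linarith
  have hmain : C * L ^ (-p) * (θ * L ^ (p - a) - log 2 / 4 * L ^ (p - a - 1))
      = C * θ * L ^ (-a) - C * (log 2 / 4) * (L * y) := by
    rw [← hpow₁, ← hpow₂]; ring
  have := mul_le_mul_of_nonneg_left hdef (by positivity : 0 ≤ C * L ^ (-p))
  rw [contractionMean, one_div_mul_eq_div, div_le_iff₀ (by linarith)]
  linarith

lemma le_mul_log_rpow_of_le_contractionMean {p a C A : ℝ} (hpa : a + 2 ≤ p) {d r : ℕ → ℝ}
    (hd1 : 0 ≤ d 1) (hC : 0 ≤ C) (hAC : d 1 + A ≤ C * (log 2 / 8)) {n₀ : ℕ} (hn₀ : 2 ≤ n₀)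
    (hbase : ∀ n ∈ Icc 2 n₀, d n ≤ C * log n ^ (-a))
    (hr : ∀ n, n₀ < n → r n ≤ A * log n ^ (-(a + 2)))
    (hrec : ∀ n, 2 ≤ n → d n ≤ contractionMean p d n + r n) :
    ∀ n, 2 ≤ n → d n ≤ C * log n ^ (-a) := by
  intro n
  induction n using Nat.strong_induction_on with
  | _ n ih =>
  intro hn
  rcases le_or_gt n n₀ with hle | hlt
  · exact hbase n (mem_Icc.mpr ⟨hn, hle⟩)
  · have hdi : ∀ i ∈ Ioc 1 (n - 1), d i ≤ C * log i ^ (-a) := fun i hi => by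
      have hi' := mem_Ioc.mp hi
      exact ih i (by omega) hi'.1
    have hmean := contractionMean_le hpa (by omega) hd1 hC hdi
    have hremainder :
        (d 1 - C * (log 2 / 8)) * log n ^ (-(a + 2)) + A * log n ^ (-(a + 2)) ≤ 0 := by
      rw [← add_mul]
      exact mul_nonpos_of_nonpos_of_nonneg (by linarith) (by positivity)
    linarith [hrec n hn, hr n hlt]

lemma Finset.exists_le_mul_of_pos {ι : Type*} (s : Finset ι) (f g : ι → ℝ)
    (hg : ∀ i ∈ s, 0 < g i) : ∃ B, ∀ i ∈ s, f i ≤ B * g i := by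
  obtain ⟨B, hB⟩ := (s.image fun i => f i / g i).exists_le
  exact ⟨B, fun i hi => (div_le_iff₀ (hg i hi)).mp (hB _ (mem_image_of_mem _ hi))⟩

theorem isBigO_log_rpow_of_le_contractionMean {p a : ℝ} (hpa : a + 2 ≤ p) {d r : ℕ → ℝ}
    (hd : ∀ n, 0 ≤ d n) (hrec : ∀ n, 2 ≤ n → d n ≤ contractionMean p d n + r n)
    (hr : r =O[atTop] fun n : ℕ => log n ^ (-(a + 2))) :
    d =O[atTop] fun n : ℕ => log n ^ (-a) := by
  obtain ⟨A, hA⟩ := hr.bound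
  obtain ⟨N, hN⟩ := eventually_atTop.mp hA
  set n₀ := max N 2
  have hr' : ∀ n, n₀ < n → r n ≤ A * log n ^ (-(a + 2)) := fun n hn => by
    have := hN n (by omega)
    rw [norm_of_nonneg (rpow_nonneg (log_natCast_nonneg n) _)] at this
    exact (le_norm_self _).trans this
  obtain ⟨B, hB⟩ := (Icc 2 n₀).exists_le_mul_of_pos d (fun n => log n ^ (-a)) fun n hn =>
    rpow_pos_of_pos (log_pos (by exact_mod_cast (mem_Icc.mp hn).1)) _
  set C := B ⊔ 0 ⊔ 8 * (d 1 + A) / log 2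
  have hC : 0 ≤ C := le_sup_of_le_left le_sup_right
  have hAC : d 1 + A ≤ C * (log 2 / 8) := by
    have : 8 * (d 1 + A) / log 2 ≤ C := le_sup_right
    rw [div_le_iff₀ (log_pos one_lt_two)] at this
    linarith
  have hbase : ∀ n ∈ Icc 2 n₀, d n ≤ C * log n ^ (-a) := fun n hn =>
    (hB n hn).trans (by gcongr; exact le_sup_of_le_left le_sup_left)
  have key := le_mul_log_rpow_of_le_contractionMean hpa (hd 1) hC hAC (le_max_right N 2)
    hbase hr' hrec
  refine IsBigO.of_bound C ?_
  filter_upwards [eventually_ge_atTop 2] with n hn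
  rw [norm_of_nonneg (hd n), norm_of_nonneg (rpow_nonneg (log_natCast_nonneg n) _)]
  exact key n hn

lemma isBigO_log_rpow_of_le {s t : ℝ} (hst : s ≤ t) :
    (fun n : ℕ => log n ^ s) =O[atTop] fun n : ℕ => log n ^ t := by
  refine IsBigO.of_bound 1 ?_
  filter_upwards [eventually_ge_atTop 3] with n hn
  have hlog := one_le_log_natCast hn
  rw [one_mul, norm_of_nonneg (by positivity), norm_of_nonneg (by positivity)]
  exact rpow_le_rpow_of_exponent_le hlog hst

theorem contraction_lemma_general
    (d r : ℕ → ℝ) (hd : ∀ n, 0 ≤ d n)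
    (hrec : ∀ n : ℕ, 2 ≤ n →
      d n ≤ (1 / harmSum (n - 1)) *
          (∑ i ∈ Finset.Icc 1 (n - 1),
            (ellFun i / ellFun n) ^ ((9 : ℝ) / 2) * d i / ((n : ℝ) - (i : ℝ)))
        + r n)
    (hrO : r =O[atTop] (fun n : ℕ => Real.log n ^ (-(5 : ℝ) / 2))) :
    ∃ ε₀ > (0 : ℝ), ∀ ε : ℝ, 0 < ε → ε ≤ ε₀ →
      d =O[atTop] (fun n : ℕ => Real.log n ^ (-(1 : ℝ) / 2 + ε)) := by
  rw [show -(5 : ℝ) / 2 = -(1 / 2 + 2) by norm_num] at hrO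
  have hdO := isBigO_log_rpow_of_le_contractionMean (by norm_num) hd hrec hrO
  exact ⟨1, one_pos, fun ε hε _ => hdO.trans (isBigO_log_rpow_of_le (by linarith))⟩

/-- the contraction lemma. If nonnegative sequences `(d_n)`, `(r_n)` satisfy
`d_n ≤ E[(ℓ_{I_n}/ℓ_n)^{9/2} d_{I_n}] + r_n` for `n ≥ 2` (expectation over
`P(I_n = i) = 1/((n−i)θ(n−1))`, `1 ≤ i ≤ n−1`) and `r_n = O((log n)^{−5/2})`, then for
every sufficiently small `ε > 0` one has `d_n = O((log n)^{−1/2+ε})`. -/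
theorem contraction_lemma
    (d r : ℕ → ℝ) (hd : ∀ n, 0 ≤ d n) (hr : ∀ n, 0 ≤ r n)
    (hrec : ∀ n : ℕ, 2 ≤ n →
      d n ≤ (1 / harmSum (n - 1)) *
          (∑ i ∈ Finset.Icc 1 (n - 1),
            (ellFun i / ellFun n) ^ ((9 : ℝ) / 2) * d i / ((n : ℝ) - (i : ℝ)))
        + r n)
    (hrO : r =O[atTop] (fun n : ℕ => Real.log n ^ (-(5 : ℝ) / 2))) :
    ∃ ε₀ > (0 : ℝ), ∀ ε : ℝ, 0 < ε → ε ≤ ε₀ →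
      d =O[atTop] (fun n : ℕ => Real.log n ^ (-(1 : ℝ) / 2 + ε)) :=
  contraction_lemma_general d r hd hrec hrO
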